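/- Suppose (A,d_A) and (B,d_B) are graded commutative dg-division algebras, (A,d_A) is acyclic, and φ:(A,d_A)→(B,d_B) is a dg-extension of dg-algebras. If the restriction φ|_{ker(d_A)}: ker(d_A)→ker(d_B) is a graded-separable extension of graded rings, then φ is a dg-separable extension. If moreover the characteristic of A is different from 2, the converse also holds: φ dg-separable implies φ|_{ker(d_A)} graded-separable. -/

import Mathlib

open scoped TensorProduct

section DGCore

variable {A : Type} [Ring A] {B : Type} [Ring B]

/-- `(A, d)` together with the grading `𝒜` is a differential graded ring:
`d` is a square-zero additive endomorphism of degree `1` satisfying the graded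
Leibniz rule. -/
structure IsDGRing (𝒜 : ℤ → AddSubgroup A) (d : A →+ A) : Prop where
  d_sq : ∀ x, d (d x) = 0
  d_mem : ∀ (i : ℤ), ∀ x ∈ 𝒜 i, d x ∈ 𝒜 (i + 1)
  leibniz : ∀ (i : ℤ) (a b : A), a ∈ 𝒜 i →
    d (a * b) = d a * b + ((Int.negOnePow i : ℤ)) • (a * d b)

/-- A homomorphism of differential graded rings (a dg-extension). -/
structure IsDGHom (𝒜 : ℤ → AddSubgroup A) (dA : A →+ A)
    (𝒝 : ℤ → AddSubgroup B) (dB : B →+ B) (φ : A →+* B) : Prop where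
  map_mem : ∀ (i : ℤ), ∀ x ∈ 𝒜 i, φ x ∈ 𝒝 i
  map_d : ∀ x, φ (dA x) = dB (φ x)

/-- Graded commutativity: `a * b = (-1)^{|a||b|} b * a` for homogeneous elements. -/
def IsGradedComm (𝒜 : ℤ → AddSubgroup A) : Prop :=
  ∀ (i j : ℤ) (a b : A), a ∈ 𝒜 i → b ∈ 𝒜 j →
    a * b = ((Int.negOnePow (i * j) : ℤ)) • (b * a)

/-- A dg-ring is acyclic if its homology vanishes, i.e. every cycle is a boundary. -/
def IsAcyclic (d : A →+ A) : Prop := ∀ x, d x = 0 → ∃ y, d y = x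

/-- A dg left ideal: a graded additive subgroup closed under the differential and
under left multiplication. -/
def IsDGLeftIdeal (𝒜 : ℤ → AddSubgroup A) [GradedRing 𝒜] (d : A →+ A)
    (I : AddSubgroup A) : Prop :=
  (∀ (a : A), ∀ x ∈ I, a * x ∈ I) ∧ (∀ x ∈ I, d x ∈ I) ∧
    (∀ x ∈ I, ∀ i : ℤ, (DirectSum.decompose 𝒜 x i : A) ∈ I)

/-- A dg right ideal. -/
def IsDGRightIdeal (𝒜 : ℤ → AddSubgroup A) [GradedRing 𝒜] (d : A →+ A)
    (I : AddSubgroup A) : Prop :=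
  (∀ (a : A), ∀ x ∈ I, x * a ∈ I) ∧ (∀ x ∈ I, d x ∈ I) ∧
    (∀ x ∈ I, ∀ i : ℤ, (DirectSum.decompose 𝒜 x i : A) ∈ I)

/-- A dg-division ring: the only dg left ideals and the only dg right ideals
are `0` and the whole ring. -/
def IsDGDivisionRing (𝒜 : ℤ → AddSubgroup A) [GradedRing 𝒜] (d : A →+ A) : Prop :=
  (0 : A) ≠ 1 ∧ (∀ I, IsDGLeftIdeal 𝒜 d I → I = ⊥ ∨ I = ⊤) ∧
    (∀ I, IsDGRightIdeal 𝒜 d I → I = ⊥ ∨ I = ⊤)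

/-- A graded division ring (gr-field): every nonzero homogeneous element is invertible. -/
def IsGradedDivisionRing (𝒜 : ℤ → AddSubgroup A) : Prop :=
  (0 : A) ≠ 1 ∧ ∀ (i : ℤ) (x : A), x ∈ 𝒜 i → x ≠ 0 → IsUnit x

/-- The relations defining `B ⊗[A] B` inside `B ⊗[ℤ] B`, for an extension `φ : A →+* B`. -/
def sepRel (φ : A →+* B) : Submodule ℤ (B ⊗[ℤ] B) :=
  Submodule.span ℤ {x | ∃ (b b' : B) (a : A),
    x = (b * φ a) ⊗ₜ[ℤ] b' - b ⊗ₜ[ℤ] (φ a * b')}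

/-- The balanced tensor product `B ⊗[A] B` for an extension `φ : A →+* B`. -/
abbrev SepTensor (φ : A →+* B) := (B ⊗[ℤ] B) ⧸ sepRel φ

/-- The canonical projection `B ⊗[ℤ] B → B ⊗[A] B`. -/
noncomputable def sepMk (φ : A →+* B) : B ⊗[ℤ] B →ₗ[ℤ] SepTensor φ := (sepRel φ).mkQ

/-- The multiplication map `μ : B ⊗[A] B → B`. -/
noncomputable def sepMul (φ : A →+* B) : SepTensor φ →ₗ[ℤ] B :=
  Submodule.liftQ _ (TensorProduct.lift (LinearMap.mul ℤ B)) (by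
    rw [sepRel, Submodule.span_le]
    rintro x ⟨b, b', a, rfl⟩
    simp [SetLike.mem_coe, LinearMap.mem_ker, mul_assoc]
    erw [LinearMap.mem_ker, map_sub, TensorProduct.lift.tmul, TensorProduct.lift.tmul]
    simp [mul_assoc])

/-- Left multiplication by `b` on `B ⊗[A] B`. -/
noncomputable def sepLMul (φ : A →+* B) (b : B) : SepTensor φ →ₗ[ℤ] SepTensor φ :=
  Submodule.mapQ _ _ (TensorProduct.map (LinearMap.mulLeft ℤ b) LinearMap.id) (by
    rw [sepRel, Submodule.span_le]
    rintro x ⟨b₀, b', a, rfl⟩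
    simp only [SetLike.mem_coe, Submodule.mem_comap, map_sub, TensorProduct.map_tmul,
      LinearMap.mulLeft_apply, LinearMap.id_apply]
    exact Submodule.subset_span ⟨b * b₀, b', a, by
      erw [map_sub, TensorProduct.map_tmul, TensorProduct.map_tmul]; simp [mul_assoc]⟩)

/-- Right multiplication by `b` on `B ⊗[A] B`. -/
noncomputable def sepRMul (φ : A →+* B) (b : B) : SepTensor φ →ₗ[ℤ] SepTensor φ :=
  Submodule.mapQ _ _ (TensorProduct.map LinearMap.id (LinearMap.mulRight ℤ b)) (by
    rw [sepRel, Submodule.span_le]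
    rintro x ⟨b₀, b', a, rfl⟩
    simp only [SetLike.mem_coe, Submodule.mem_comap, map_sub, TensorProduct.map_tmul,
      LinearMap.mulRight_apply, LinearMap.id_apply]
    exact Submodule.subset_span ⟨b₀, b' * b, a, by
      erw [map_sub, TensorProduct.map_tmul, TensorProduct.map_tmul]; simp [mul_assoc]⟩)

/-- The grading on `B ⊗[A] B`: the degree `n` part is generated by the classes of
`b ⊗ b'` with `b, b'` homogeneous of degrees summing to `n`. -/
noncomputable def sepGrading (φ : A →+* B) (𝒝 : ℤ → AddSubgroup B) (n : ℤ) :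
    AddSubgroup (SepTensor φ) :=
  AddSubgroup.closure {x | ∃ (i j : ℤ) (b b' : B), b ∈ 𝒝 i ∧ b' ∈ 𝒝 j ∧ i + j = n ∧
    x = sepMk φ (b ⊗ₜ[ℤ] b')}

/-- The sign involution `b ↦ (-1)^{|b|} b` of a graded ring. -/
noncomputable def signMap (𝒝 : ℤ → AddSubgroup B) [GradedRing 𝒝] : B →+ B :=
  (DirectSum.toAddMonoid fun i =>
      (smulAddHom ℤ B ((Int.negOnePow i : ℤ))).comp (𝒝 i).subtype).comp
    (DirectSum.decomposeAddEquiv 𝒝).toAddMonoidHom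

lemma signMap_of_mem (𝒝 : ℤ → AddSubgroup B) [GradedRing 𝒝] {i : ℤ} {x : B}
    (hx : x ∈ 𝒝 i) : signMap 𝒝 x = ((Int.negOnePow i : ℤ)) • x := by
  classical
  unfold signMap
  simp only [AddMonoidHom.comp_apply, AddEquiv.coe_toAddMonoidHom,
    DirectSum.decomposeAddEquiv_apply, DirectSum.decompose_of_mem 𝒝 hx,
    DirectSum.toAddMonoid_of]
  rfl

/-- The differential `d ⊗ 1 + ε ⊗ d` on `B ⊗[ℤ] B` (with Koszul sign). -/
noncomputable def sepDiffPre (𝒝 : ℤ → AddSubgroup B) [GradedRing 𝒝] (dB : B →+ B) :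
    B ⊗[ℤ] B →ₗ[ℤ] B ⊗[ℤ] B :=
  TensorProduct.map dB.toIntLinearMap LinearMap.id +
    TensorProduct.map (signMap 𝒝).toIntLinearMap dB.toIntLinearMap

/-- `D` is the differential induced on `B ⊗[A] B` by `d_B ⊗ 1 + ε ⊗ d_B`. -/
def IsSepDiff (φ : A →+* B) (𝒝 : ℤ → AddSubgroup B) [GradedRing 𝒝] (dB : B →+ B)
    (D : SepTensor φ →+ SepTensor φ) : Prop :=
  ∀ x : B ⊗[ℤ] B, D (sepMk φ x) = sepMk φ (sepDiffPre 𝒝 dB x)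

/-- `ρ : B → B ⊗[A] B` is a `B`-`B`-bimodule section of the multiplication map. -/
def IsSepSection (φ : A →+* B) (ρ : B →+ SepTensor φ) : Prop :=
  (∀ b, sepMul φ (ρ b) = b) ∧
    (∀ (b₁ c b₂ : B), ρ (b₁ * c * b₂) = sepLMul φ b₁ (sepRMul φ b₂ (ρ c)))

/-- The extension `φ : A →+* B` is separable: the multiplication map
`B ⊗[A] B → B` splits as a bimodule map. -/
def IsSeparableExt (φ : A →+* B) : Prop := ∃ ρ : B →+ SepTensor φ, IsSepSection φ ρ

/-- The extension `φ : A →+* B` of graded rings is graded-separable: the multiplication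
map `B ⊗[A] B → B` splits as a map of graded bimodules. -/
def IsGrSeparable (φ : A →+* B) (𝒝 : ℤ → AddSubgroup B) : Prop :=
  ∃ ρ : B →+ SepTensor φ, IsSepSection φ ρ ∧
    ∀ (n : ℤ), ∀ b ∈ 𝒝 n, ρ b ∈ sepGrading φ 𝒝 n

/-- The dg-extension `φ : (A,d_A) →  (B,d_B)` is dg-separable: the multiplication map
`B ⊗[A] B → B` splits as a map of differential graded bimodules. -/
def IsDGSeparable (φ : A →+* B) (𝒝 : ℤ → AddSubgroup B) [GradedRing 𝒝]
    (dB : B →+ B) : Prop :=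
  ∃ D : SepTensor φ →+ SepTensor φ, IsSepDiff φ 𝒝 dB D ∧
    ∃ ρ : B →+ SepTensor φ, IsSepSection φ ρ ∧
      (∀ (n : ℤ), ∀ b ∈ 𝒝 n, ρ b ∈ sepGrading φ 𝒝 n) ∧
      (∀ b, D (ρ b) = ρ (dB b))

end DGCore

section Cycles

variable {A : Type} [Ring A] {B : Type} [Ring B]

lemma IsDGRing.leibniz_total {𝒜 : ℤ → AddSubgroup A} [GradedRing 𝒜] {d : A →+ A}
    (h : IsDGRing 𝒜 d) (a b : A) :
    d (a * b) = d a * b + signMap 𝒜 a * d b := by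
  induction a using DirectSum.Decomposition.inductionOn 𝒜 with
  | zero => simp
  | @homogeneous i x =>
      obtain ⟨x, hx⟩ := x
      rw [h.leibniz i x b hx, signMap_of_mem 𝒜 hx, smul_mul_assoc]
  | add a a' ha ha' =>
      rw [add_mul, map_add, ha, ha', map_add, map_add, add_mul, add_mul]
      abel

/-- The subring of cycles `ker d` of a dg-ring `(A, d)`. -/
def cyclesSubring (𝒜 : ℤ → AddSubgroup A) [GradedRing 𝒜] (d : A →+ A)
    (h : IsDGRing 𝒜 d) : Subring A where
  carrier := {x | d x = 0}
  zero_mem' := map_zero d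
  add_mem' := by
    intro x y hx hy
    simp only [Set.mem_setOf_eq] at *
    rw [map_add, hx, hy, add_zero]
  neg_mem' := by
    intro x hx
    simp only [Set.mem_setOf_eq] at *
    rw [map_neg, hx, neg_zero]
  one_mem' := by
    have h2 : d ((1 : A) * 1) = d 1 * 1 + ((Int.negOnePow 0 : ℤ)) • ((1 : A) * d 1) :=
      h.leibniz 0 1 1 (SetLike.one_mem_graded 𝒜)
    simp only [one_mul, mul_one, Int.negOnePow_zero, Units.val_one, one_smul] at h2
    have h3 : d (1 : A) + 0 = d 1 + d 1 := by rw [add_zero]; exact h2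
    exact (add_left_cancel h3).symm
  mul_mem' := by
    intro x y hx hy
    simp only [Set.mem_setOf_eq] at *
    rw [h.leibniz_total x y, hx, hy, zero_mul, mul_zero, add_zero]

/-- The grading on the subring of cycles, inherited from the ambient graded ring. -/
def cyclesGrading (𝒜 : ℤ → AddSubgroup A) [GradedRing 𝒜] (d : A →+ A)
    (h : IsDGRing 𝒜 d) : ℤ → AddSubgroup (cyclesSubring 𝒜 d h) :=
  fun i => (𝒜 i).comap (cyclesSubring 𝒜 d h).subtype.toAddMonoidHom

end Cycles

/-!
Acyclicity of `A` gives `z` of degree `-1` with `d z = 1`, and `w = φ z` contracts `B`: every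
`b` is `(b - w d b) + w d b`, where `b - w d b` and `d b` are cycles. Splittings of `μ` are the
same as separability idempotents `e` (`μ e = 1`, `b e = e b`), of degree `0` in the graded case.

Given a graded idempotent for the cycles, its image in `B ⊗[A] B` is killed by the differential
and commutes with the cycles; being of degree `0` it also commutes with `w`, which lies in the
image of `A`, hence with all of `B`.

Conversely, if `2 ≠ 0` then `z² = 0`: it is a homogeneous cycle with `2 z² = 0`, and nonzero
homogeneous cycles of a dg-division ring are invertible. So `b ↦ b - w d b` is a ring retraction
of `B` onto its cycles, compatible with the one of `A`, and it carries a separability idempotent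
of `B ⊗[A] B` to one of `Z(B) ⊗[Z(A)] Z(B)`.
-/

section SepTensor

variable {A : Type} [Ring A] {B : Type} [Ring B] {φ : A →+* B}

@[elab_as_elim]
lemma SepTensor.induction_on {P : SepTensor φ → Prop} (t : SepTensor φ) (zero : P 0)
    (tmul : ∀ b b' : B, P (sepMk φ (b ⊗ₜ[ℤ] b'))) (add : ∀ x y, P x → P y → P (x + y)) :
    P t := by
  obtain ⟨x, rfl⟩ := Submodule.mkQ_surjective (sepRel φ) t
  change P (sepMk φ x)
  induction x using TensorProduct.induction_on with
  | zero => simpa using zero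
  | tmul b b' => exact tmul b b'
  | add x y hx hy => rw [map_add]; exact add _ _ hx hy

lemma sepMul_mk (b b' : B) : sepMul φ (sepMk φ (b ⊗ₜ[ℤ] b')) = b * b' := by
  change TensorProduct.lift (LinearMap.mul ℤ B) (b ⊗ₜ[ℤ] b') = b * b'
  erw [TensorProduct.lift.tmul]; rfl

lemma sepLMul_mk (c b b' : B) :
    sepLMul φ c (sepMk φ (b ⊗ₜ[ℤ] b')) = sepMk φ ((c * b) ⊗ₜ[ℤ] b') := by
  change sepMk φ (TensorProduct.map (LinearMap.mulLeft ℤ c) LinearMap.id (b ⊗ₜ[ℤ] b')) = _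
  erw [TensorProduct.map_tmul]; rfl

lemma sepRMul_mk (c b b' : B) :
    sepRMul φ c (sepMk φ (b ⊗ₜ[ℤ] b')) = sepMk φ (b ⊗ₜ[ℤ] (b' * c)) := by
  change sepMk φ (TensorProduct.map LinearMap.id (LinearMap.mulRight ℤ c) (b ⊗ₜ[ℤ] b')) = _
  erw [TensorProduct.map_tmul]; rfl

lemma sepMk_mul_tmul (b b' : B) (a : A) :
    sepMk φ ((b * φ a) ⊗ₜ[ℤ] b') = sepMk φ (b ⊗ₜ[ℤ] (φ a * b')) := by
  rw [sepMk, Submodule.mkQ_apply, Submodule.mkQ_apply, Submodule.Quotient.eq]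
  exact Submodule.subset_span ⟨b, b', a, rfl⟩

lemma sepLMul_one (t : SepTensor φ) : sepLMul φ 1 t = t := by
  induction t using SepTensor.induction_on with
  | zero => simp
  | tmul b b' => rw [sepLMul_mk, one_mul]
  | add x y hx hy => rw [map_add, hx, hy]

lemma sepRMul_one (t : SepTensor φ) : sepRMul φ 1 t = t := by
  induction t using SepTensor.induction_on with
  | zero => simp
  | tmul b b' => rw [sepRMul_mk, mul_one]
  | add x y hx hy => rw [map_add, hx, hy]

lemma sepLMul_mul (x y : B) (t : SepTensor φ) :
    sepLMul φ (x * y) t = sepLMul φ x (sepLMul φ y t) := by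
  induction t using SepTensor.induction_on with
  | zero => simp
  | tmul b b' => rw [sepLMul_mk, sepLMul_mk, sepLMul_mk, mul_assoc]
  | add u v hu hv => rw [map_add, map_add, map_add, hu, hv]

lemma sepRMul_mul (x y : B) (t : SepTensor φ) :
    sepRMul φ (x * y) t = sepRMul φ y (sepRMul φ x t) := by
  induction t using SepTensor.induction_on with
  | zero => simp
  | tmul b b' => rw [sepRMul_mk, sepRMul_mk, sepRMul_mk, mul_assoc]
  | add u v hu hv => rw [map_add, map_add, map_add, hu, hv]

lemma sepLMul_sepRMul (x y : B) (t : SepTensor φ) :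
    sepLMul φ x (sepRMul φ y t) = sepRMul φ y (sepLMul φ x t) := by
  induction t using SepTensor.induction_on with
  | zero => simp
  | tmul b b' => rw [sepRMul_mk, sepLMul_mk, sepLMul_mk, sepRMul_mk]
  | add u v hu hv => simp only [map_add, hu, hv]

lemma sepLMul_add (x y : B) (t : SepTensor φ) :
    sepLMul φ (x + y) t = sepLMul φ x t + sepLMul φ y t := by
  induction t using SepTensor.induction_on with
  | zero => simp
  | tmul b b' => rw [sepLMul_mk, sepLMul_mk, sepLMul_mk, add_mul, ← map_add,
      TensorProduct.add_tmul]
  | add u v hu hv => rw [map_add, map_add, map_add, hu, hv]; abel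

lemma sepRMul_add (x y : B) (t : SepTensor φ) :
    sepRMul φ (x + y) t = sepRMul φ x t + sepRMul φ y t := by
  induction t using SepTensor.induction_on with
  | zero => simp
  | tmul b b' => rw [sepRMul_mk, sepRMul_mk, sepRMul_mk, mul_add, ← map_add,
      TensorProduct.tmul_add]
  | add u v hu hv => rw [map_add, map_add, map_add, hu, hv]; abel

lemma sepMul_sepLMul (x : B) (t : SepTensor φ) :
    sepMul φ (sepLMul φ x t) = x * sepMul φ t := by
  induction t using SepTensor.induction_on with
  | zero => simp
  | tmul b b' => rw [sepLMul_mk, sepMul_mk, sepMul_mk, mul_assoc]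
  | add u v hu hv => rw [map_add, map_add, map_add, hu, hv, mul_add]

lemma sepLMul_mem_sepGrading {𝒝 : ℤ → AddSubgroup B} [SetLike.GradedMonoid 𝒝]
    {i n : ℤ} {b : B} (hb : b ∈ 𝒝 i) {t : SepTensor φ} (ht : t ∈ sepGrading φ 𝒝 n) :
    sepLMul φ b t ∈ sepGrading φ 𝒝 (i + n) := by
  induction ht using AddSubgroup.closure_induction with
  | mem x hx =>
      obtain ⟨j, k, c, c', hc, hc', rfl, rfl⟩ := hx
      rw [sepLMul_mk]
      exact AddSubgroup.subset_closure
        ⟨i + j, k, b * c, c', SetLike.mul_mem_graded hb hc, hc', by ring, rfl⟩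
  | zero => rw [map_zero]; exact zero_mem _
  | add x y _ _ hx hy => rw [map_add]; exact add_mem hx hy
  | neg x _ hx => rw [map_neg]; exact neg_mem hx

lemma sepLMul_eq_negOnePow_smul_sepRMul {𝒝 : ℤ → AddSubgroup B} (hcomm : IsGradedComm 𝒝)
    {a : A} {k n : ℤ} (ha : φ a ∈ 𝒝 k) {t : SepTensor φ} (ht : t ∈ sepGrading φ 𝒝 n) :
    sepLMul φ (φ a) t = ((k * n).negOnePow : ℤ) • sepRMul φ (φ a) t := by
  induction ht using AddSubgroup.closure_induction with
  | mem x hx =>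
      obtain ⟨i, j, b, b', hb, hb', rfl, rfl⟩ := hx
      rw [sepLMul_mk, sepRMul_mk, hcomm k i _ _ ha hb, ← TensorProduct.smul_tmul', map_zsmul,
        sepMk_mul_tmul, hcomm k j _ _ ha hb', TensorProduct.tmul_smul, map_zsmul, smul_smul,
        mul_add, Int.negOnePow_add, Units.val_mul]
  | zero => simp
  | add x y _ _ hx hy => rw [map_add, map_add, hx, hy, smul_add]
  | neg x _ hx => rw [map_neg, map_neg, hx, smul_neg]

def IsSeparabilityIdempotent (φ : A →+* B) (e : SepTensor φ) : Prop :=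
  sepMul φ e = 1 ∧ ∀ b, sepLMul φ b e = sepRMul φ b e

noncomputable def sepLMulHom (φ : A →+* B) (e : SepTensor φ) : B →+ SepTensor φ :=
  AddMonoidHom.mk' (fun b => sepLMul φ b e) (fun x y => sepLMul_add x y e)

@[simp]
lemma sepLMulHom_apply (e : SepTensor φ) (b : B) : sepLMulHom φ e b = sepLMul φ b e := rfl

lemma IsSeparabilityIdempotent.isSepSection {e : SepTensor φ}
    (he : IsSeparabilityIdempotent φ e) : IsSepSection φ (sepLMulHom φ e) := by
  refine ⟨fun b => ?_, fun b₁ c b₂ => ?_⟩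
  · rw [sepLMulHom_apply, sepMul_sepLMul, he.1, mul_one]
  · simp only [sepLMulHom_apply]
    rw [sepLMul_mul, sepLMul_mul, he.2 b₂, ← sepLMul_sepRMul]

lemma IsSepSection.eq_sepLMul {ρ : B →+ SepTensor φ} (hρ : IsSepSection φ ρ) (b : B) :
    ρ b = sepLMul φ b (ρ 1) := by
  simpa [sepRMul_one] using hρ.2 b 1 1

lemma IsSepSection.isSeparabilityIdempotent {ρ : B →+ SepTensor φ}
    (hρ : IsSepSection φ ρ) : IsSeparabilityIdempotent φ (ρ 1) := by
  refine ⟨hρ.1 1, fun b => ?_⟩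
  rw [← hρ.eq_sepLMul]
  simpa [sepLMul_one] using hρ.2 1 1 b

lemma sepLMulHom_mem_sepGrading {𝒝 : ℤ → AddSubgroup B} [SetLike.GradedMonoid 𝒝]
    {e : SepTensor φ} {n : ℤ} {b : B} (hb : b ∈ 𝒝 n) (he0 : e ∈ sepGrading φ 𝒝 0) :
    sepLMulHom φ e b ∈ sepGrading φ 𝒝 n := by
  simpa using sepLMul_mem_sepGrading hb he0

lemma isGrSeparable_iff {𝒝 : ℤ → AddSubgroup B} [SetLike.GradedMonoid 𝒝] :
    IsGrSeparable φ 𝒝 ↔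
      ∃ e, IsSeparabilityIdempotent φ e ∧ e ∈ sepGrading φ 𝒝 0 := by
  constructor
  · rintro ⟨ρ, hρ, hρgr⟩
    exact ⟨ρ 1, hρ.isSeparabilityIdempotent, hρgr 0 1 SetLike.GradedOne.one_mem⟩
  · rintro ⟨e, he, he0⟩
    exact ⟨sepLMulHom φ e, he.isSepSection, fun _ _ hb => sepLMulHom_mem_sepGrading hb he0⟩

lemma IsDGSeparable.exists_isSeparabilityIdempotent {𝒝 : ℤ → AddSubgroup B} [GradedRing 𝒝]
    {dB : B →+ B} (h : IsDGSeparable φ 𝒝 dB) :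
    ∃ e, IsSeparabilityIdempotent φ e ∧ e ∈ sepGrading φ 𝒝 0 := by
  obtain ⟨-, -, ρ, hρ, hρgr, -⟩ := h
  exact isGrSeparable_iff.mp ⟨ρ, hρ, hρgr⟩

end SepTensor

section SepMap

variable {A B A' B' : Type} [Ring A] [Ring B] [Ring A'] [Ring B']
  {φ : A →+* B} {φ' : A' →+* B'} {f : B →+* B'} {g : A →+* A'}

noncomputable def sepMap (f : B →+* B') (g : A →+* A') (hfg : f.comp φ = φ'.comp g) :
    SepTensor φ →ₗ[ℤ] SepTensor φ' :=
  Submodule.mapQ _ _ (TensorProduct.map f.toAddMonoidHom.toIntLinearMap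
    f.toAddMonoidHom.toIntLinearMap) (by
      rw [sepRel, Submodule.span_le]
      rintro x ⟨b, b', a, rfl⟩
      have hf : f (φ a) = φ' (g a) := RingHom.congr_fun hfg a
      refine Submodule.subset_span ⟨f b, f b', g a, ?_⟩
      erw [map_sub, TensorProduct.map_tmul, TensorProduct.map_tmul]
      simp [hf])

variable (hfg : f.comp φ = φ'.comp g)

lemma sepMap_mk (b b' : B) :
    sepMap f g hfg (sepMk φ (b ⊗ₜ[ℤ] b')) = sepMk φ' (f b ⊗ₜ[ℤ] f b') := by
  change sepMk φ' (TensorProduct.map f.toAddMonoidHom.toIntLinearMap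
    f.toAddMonoidHom.toIntLinearMap (b ⊗ₜ[ℤ] b')) = _
  erw [TensorProduct.map_tmul]; rfl

lemma sepMul_sepMap (t : SepTensor φ) : sepMul φ' (sepMap f g hfg t) = f (sepMul φ t) := by
  induction t using SepTensor.induction_on with
  | zero => simp
  | tmul b b' => rw [sepMap_mk, sepMul_mk, sepMul_mk, map_mul]
  | add u v hu hv => simp only [map_add, hu, hv]

lemma sepMap_sepLMul (b : B) (t : SepTensor φ) :
    sepMap f g hfg (sepLMul φ b t) = sepLMul φ' (f b) (sepMap f g hfg t) := by
  induction t using SepTensor.induction_on with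
  | zero => simp
  | tmul c c' => rw [sepLMul_mk, sepMap_mk, sepMap_mk, sepLMul_mk, map_mul]
  | add u v hu hv => simp only [map_add, hu, hv]

lemma sepMap_sepRMul (b : B) (t : SepTensor φ) :
    sepMap f g hfg (sepRMul φ b t) = sepRMul φ' (f b) (sepMap f g hfg t) := by
  induction t using SepTensor.induction_on with
  | zero => simp
  | tmul c c' => rw [sepRMul_mk, sepMap_mk, sepMap_mk, sepRMul_mk, map_mul]
  | add u v hu hv => simp only [map_add, hu, hv]

lemma sepMap_mem_sepGrading {𝒝 : ℤ → AddSubgroup B} {𝒝' : ℤ → AddSubgroup B'}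
    (hf : ∀ i, ∀ b ∈ 𝒝 i, f b ∈ 𝒝' i) {n : ℤ} {t : SepTensor φ}
    (ht : t ∈ sepGrading φ 𝒝 n) : sepMap f g hfg t ∈ sepGrading φ' 𝒝' n := by
  induction ht using AddSubgroup.closure_induction with
  | mem x hx =>
      obtain ⟨i, j, b, b', hb, hb', hij, rfl⟩ := hx
      rw [sepMap_mk]
      exact AddSubgroup.subset_closure ⟨i, j, f b, f b', hf i b hb, hf j b' hb', hij, rfl⟩
  | zero => rw [map_zero]; exact zero_mem _
  | add x y _ _ hx hy => rw [map_add]; exact add_mem hx hy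
  | neg x _ hx => rw [map_neg]; exact neg_mem hx

lemma IsSeparabilityIdempotent.sepLMul_sepMap {e : SepTensor φ}
    (he : IsSeparabilityIdempotent φ e) (b : B) :
    sepLMul φ' (f b) (sepMap f g hfg e) = sepRMul φ' (f b) (sepMap f g hfg e) := by
  rw [← sepMap_sepLMul, ← sepMap_sepRMul, he.2 b]

lemma IsSeparabilityIdempotent.sepMap {e : SepTensor φ} (he : IsSeparabilityIdempotent φ e)
    (hf : Function.Surjective f) : IsSeparabilityIdempotent φ' (sepMap f g hfg e) := by
  refine ⟨by rw [sepMul_sepMap, he.1, map_one], fun b' => ?_⟩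
  obtain ⟨b, rfl⟩ := hf b'
  exact he.sepLMul_sepMap hfg b

end SepMap

section Differential

variable {A : Type} [Ring A] {B : Type} [Ring B]
  {𝒜 : ℤ → AddSubgroup A} [GradedRing 𝒜] {𝒝 : ℤ → AddSubgroup B} [GradedRing 𝒝]
  {dA : A →+ A} {dB : B →+ B} {φ : A →+* B}

lemma IsDGRing.d_one (h : IsDGRing 𝒜 dA) : dA 1 = 0 := (cyclesSubring 𝒜 dA h).one_mem

instance (h : IsDGRing 𝒜 dA) : SetLike.GradedMonoid (cyclesGrading 𝒜 dA h) where
  one_mem := SetLike.GradedOne.one_mem (A := 𝒜)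
  mul_mem _ _ _ _ hx hy := SetLike.GradedMul.mul_mem (A := 𝒜) hx hy

lemma signMap_mul (x y : B) : signMap 𝒝 (x * y) = signMap 𝒝 x * signMap 𝒝 y := by
  induction x using DirectSum.Decomposition.inductionOn 𝒝 with
  | zero => simp
  | @homogeneous i m =>
      obtain ⟨m, hm⟩ := m
      induction y using DirectSum.Decomposition.inductionOn 𝒝 with
      | zero => simp
      | @homogeneous j m' =>
          obtain ⟨m', hm'⟩ := m'
          rw [signMap_of_mem 𝒝 hm, signMap_of_mem 𝒝 hm',
            signMap_of_mem 𝒝 (SetLike.mul_mem_graded hm hm'), Int.negOnePow_add,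
            smul_mul_assoc, mul_smul_comm, smul_smul, Units.val_mul]
      | add y y' hy hy' => rw [mul_add, map_add, hy, hy', map_add, mul_add]
  | add x x' hx hx' => rw [add_mul, map_add, hx, hx', map_add, add_mul]

lemma IsDGHom.signMap_map (hφ : IsDGHom 𝒜 dA 𝒝 dB φ) (a : A) :
    signMap 𝒝 (φ a) = φ (signMap 𝒜 a) := by
  induction a using DirectSum.Decomposition.inductionOn 𝒜 with
  | zero => simp
  | @homogeneous i m =>
      obtain ⟨m, hm⟩ := m
      rw [signMap_of_mem 𝒜 hm, signMap_of_mem 𝒝 (hφ.map_mem i m hm), map_zsmul]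
  | add a a' ha ha' => simp only [map_add, ha, ha']

lemma sepDiffPre_tmul (x y : B) :
    sepDiffPre 𝒝 dB (x ⊗ₜ[ℤ] y) = dB x ⊗ₜ[ℤ] y + signMap 𝒝 x ⊗ₜ[ℤ] dB y := by
  erw [sepDiffPre, LinearMap.add_apply, TensorProduct.map_tmul, TensorProduct.map_tmul]; rfl

/-- The Leibniz rule and `d_B ∘ φ = φ ∘ d_A` turn each defining relation of `B ⊗[A] B`
into a sum of three such relations. -/
lemma sepRel_le_comap_sepDiffPre (hB : IsDGRing 𝒝 dB) (hφ : IsDGHom 𝒜 dA 𝒝 dB φ) :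
    sepRel φ ≤ (sepRel φ).comap (sepDiffPre 𝒝 dB) := by
  rw [sepRel, Submodule.span_le]
  rintro x ⟨b, b', a, rfl⟩
  have rel : ∀ (c c' : B) (a : A), (c * φ a) ⊗ₜ[ℤ] c' - c ⊗ₜ[ℤ] (φ a * c') ∈ sepRel φ :=
    fun c c' a => Submodule.subset_span ⟨c, c', a, rfl⟩
  have key : sepDiffPre 𝒝 dB ((b * φ a) ⊗ₜ[ℤ] b' - b ⊗ₜ[ℤ] (φ a * b')) =
      ((dB b * φ a) ⊗ₜ[ℤ] b' - dB b ⊗ₜ[ℤ] (φ a * b')) +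
      ((signMap 𝒝 b * φ (dA a)) ⊗ₜ[ℤ] b' - signMap 𝒝 b ⊗ₜ[ℤ] (φ (dA a) * b')) +
      ((signMap 𝒝 b * φ (signMap 𝒜 a)) ⊗ₜ[ℤ] dB b' -
        signMap 𝒝 b ⊗ₜ[ℤ] (φ (signMap 𝒜 a) * dB b')) := by
    rw [map_sub, sepDiffPre_tmul, sepDiffPre_tmul, hB.leibniz_total b (φ a),
      ← hφ.map_d, signMap_mul, hφ.signMap_map, hB.leibniz_total (φ a) b',
      ← hφ.map_d, hφ.signMap_map, TensorProduct.add_tmul, TensorProduct.tmul_add]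
    abel
  rw [SetLike.mem_coe, Submodule.mem_comap, key]
  exact add_mem (add_mem (rel _ _ _) (rel _ _ _)) (rel _ _ _)

noncomputable def sepDiff (hB : IsDGRing 𝒝 dB) (hφ : IsDGHom 𝒜 dA 𝒝 dB φ) :
    SepTensor φ →ₗ[ℤ] SepTensor φ :=
  Submodule.mapQ _ _ (sepDiffPre 𝒝 dB) (sepRel_le_comap_sepDiffPre hB hφ)

variable (hB : IsDGRing 𝒝 dB) (hφ : IsDGHom 𝒜 dA 𝒝 dB φ)

lemma sepDiff_mk (x : B ⊗[ℤ] B) :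
    sepDiff hB hφ (sepMk φ x) = sepMk φ (sepDiffPre 𝒝 dB x) := rfl

lemma sepDiff_sepLMul (b : B) (t : SepTensor φ) :
    sepDiff hB hφ (sepLMul φ b t) =
      sepLMul φ (dB b) t + sepLMul φ (signMap 𝒝 b) (sepDiff hB hφ t) := by
  induction t using SepTensor.induction_on with
  | zero => simp
  | tmul c c' =>
      simp only [sepLMul_mk, sepDiff_mk, sepDiffPre_tmul, hB.leibniz_total, signMap_mul,
        TensorProduct.add_tmul, map_add]
      abel
  | add u v hu hv => simp only [map_add, hu, hv]; abel

lemma sepDiff_sepMap_subtype {A₀ : Type} [Ring A₀] {ψ : A₀ →+* cyclesSubring 𝒝 dB hB}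
    {g : A₀ →+* A} (hfg : (cyclesSubring 𝒝 dB hB).subtype.comp ψ = φ.comp g)
    (t : SepTensor ψ) : sepDiff hB hφ (sepMap _ g hfg t) = 0 := by
  induction t using SepTensor.induction_on with
  | zero => simp
  | tmul c c' =>
      have hc : dB c = 0 := c.2
      have hc' : dB c' = 0 := c'.2
      rw [sepMap_mk, sepDiff_mk, sepDiffPre_tmul]
      simp [hc, hc']
  | add u v hu hv => simp only [map_add, hu, hv, add_zero]

lemma isDGSeparable_of_isSeparabilityIdempotent {e : SepTensor φ}
    (he : IsSeparabilityIdempotent φ e) (he0 : e ∈ sepGrading φ 𝒝 0)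
    (hDe : sepDiff hB hφ e = 0) : IsDGSeparable φ 𝒝 dB := by
  refine ⟨(sepDiff hB hφ).toAddMonoidHom, sepDiff_mk hB hφ, sepLMulHom φ e,
    he.isSepSection, fun _ _ hb => sepLMulHom_mem_sepGrading hb he0, fun b => ?_⟩
  rw [sepLMulHom_apply, sepLMulHom_apply, LinearMap.toAddMonoidHom_coe, sepDiff_sepLMul, hDe, map_zero, add_zero]

end Differential

section Contraction

variable {A : Type} [Ring A] {B : Type} [Ring B] {𝒝 : ℤ → AddSubgroup B} [GradedRing 𝒝]
  {d : B →+ B} {w : B}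

lemma IsGradedComm.mul_eq_mul_signMap (hcomm : IsGradedComm 𝒝) (hw : w ∈ 𝒝 (-1)) (b : B) :
    b * w = w * signMap 𝒝 b := by
  induction b using DirectSum.Decomposition.inductionOn 𝒝 with
  | zero => simp
  | @homogeneous i m =>
      obtain ⟨m, hm⟩ := m
      rw [hcomm i (-1) m w hm hw, signMap_of_mem 𝒝 hm, mul_smul_comm, mul_neg_one,
        Int.negOnePow_neg]
  | add b b' hb hb' => rw [add_mul, hb, hb', map_add, mul_add]

variable (hB : IsDGRing 𝒝 d)
include hB

lemma IsDGRing.d_sub_mul_d (hw1 : d w = 1) (b : B) : d (b - w * d b) = 0 := by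
  rw [map_sub, hB.leibniz_total, hw1, one_mul, hB.d_sq, mul_zero, add_zero, sub_self]

lemma sepLMul_eq_sepRMul_of_forall_cycles {φ : A →+* B} (hcomm : IsGradedComm 𝒝) {z : A}
    (hw : φ z ∈ 𝒝 (-1)) (hw1 : d (φ z) = 1) {e : SepTensor φ} (he0 : e ∈ sepGrading φ 𝒝 0)
    (hc : ∀ c, d c = 0 → sepLMul φ c e = sepRMul φ c e) (b : B) :
    sepLMul φ b e = sepRMul φ b e := by
  have hwe : sepLMul φ (φ z) e = sepRMul φ (φ z) e := by
    simpa using sepLMul_eq_negOnePow_smul_sepRMul hcomm hw he0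
  calc sepLMul φ b e
      = sepLMul φ (b - φ z * d b) e + sepLMul φ (φ z) (sepLMul φ (d b) e) := by
        rw [← sepLMul_mul, ← sepLMul_add, sub_add_cancel]
    _ = sepRMul φ (b - φ z * d b) e + sepRMul φ (d b) (sepRMul φ (φ z) e) := by
        rw [hc _ (hB.d_sub_mul_d hw1 b), hc _ (hB.d_sq b), sepLMul_sepRMul, hwe]
    _ = sepRMul φ b e := by rw [← sepRMul_mul, ← sepRMul_add, sub_add_cancel]

variable (hcomm : IsGradedComm 𝒝) (hw : w ∈ 𝒝 (-1)) (hw1 : d w = 1) (hww : w * w = 0)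
include hcomm hw hww

lemma IsDGRing.sub_mul_d_mul (b b' : B) :
    b * b' - w * d (b * b') = (b - w * d b) * (b' - w * d b') := by
  have h1 : b * (w * d b') = w * (signMap 𝒝 b * d b') := by
    rw [← mul_assoc, hcomm.mul_eq_mul_signMap hw b, mul_assoc]
  have h2 : (w * d b) * (w * d b') = 0 := by
    rw [mul_assoc w (d b), ← mul_assoc (d b) w, hcomm.mul_eq_mul_signMap hw (d b),
      ← mul_assoc w, ← mul_assoc w w, hww, zero_mul, zero_mul]
  rw [hB.leibniz_total b b', sub_mul, mul_sub, mul_sub, h1, h2]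
  noncomm_ring

include hw1

noncomputable def cyclesRetraction : B →+* cyclesSubring 𝒝 d hB where
  toFun b := ⟨b - w * d b, hB.d_sub_mul_d hw1 b⟩
  map_one' := Subtype.ext (by simp [hB.d_one])
  map_mul' b b' := Subtype.ext (hB.sub_mul_d_mul hcomm hw hww b b')
  map_zero' := Subtype.ext (by simp)
  map_add' x y := Subtype.ext <| by
    change x + y - w * d (x + y) = (x - w * d x) + (y - w * d y)
    rw [map_add, mul_add]
    abel

lemma cyclesRetraction_coe (b : B) :
    (cyclesRetraction hB hcomm hw hw1 hww b : B) = b - w * d b := rfl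

lemma cyclesRetraction_surjective : Function.Surjective (cyclesRetraction hB hcomm hw hw1 hww) :=
  fun c => ⟨c, Subtype.ext <| by
    rw [cyclesRetraction_coe, show d c = 0 from c.2, mul_zero, sub_zero]⟩

lemma cyclesRetraction_mem {i : ℤ} {b : B} (hb : b ∈ 𝒝 i) :
    cyclesRetraction hB hcomm hw hw1 hww b ∈ cyclesGrading 𝒝 d hB i := by
  have hwdb : w * d b ∈ 𝒝 i := by
    simpa using SetLike.mul_mem_graded hw (hB.d_mem i b hb)
  exact sub_mem hb hwdb

end Contraction

section Acyclic

variable {A : Type} [Ring A] {𝒜 : ℤ → AddSubgroup A} [GradedRing 𝒜] {dA : A →+ A}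
  (hA : IsDGRing 𝒜 dA)
include hA

lemma IsDGRing.decompose_d (x : A) (i : ℤ) :
    (DirectSum.decompose 𝒜 (dA x) i : A) = dA (DirectSum.decompose 𝒜 x (i - 1) : A) := by
  induction x using DirectSum.Decomposition.inductionOn 𝒜 with
  | zero => simp
  | @homogeneous j m =>
      obtain ⟨m, hm⟩ := m
      by_cases hij : i = j + 1
      · subst hij
        rw [DirectSum.decompose_of_mem_same 𝒜 (hA.d_mem j m hm), add_sub_cancel_right,
          DirectSum.decompose_of_mem_same 𝒜 hm]
      · rw [DirectSum.decompose_of_mem_ne 𝒜 (hA.d_mem j m hm) (fun h => hij h.symm),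
          DirectSum.decompose_of_mem_ne 𝒜 hm (fun h => hij (by omega)), map_zero]
  | add a a' ha ha' =>
      simp only [map_add, DirectSum.decompose_add, DirectSum.add_apply, AddSubgroup.coe_add,
        ha, ha']

lemma IsAcyclic.exists_mem_neg_one_d_eq_one (hac : IsAcyclic dA) :
    ∃ z ∈ 𝒜 (-1), dA z = 1 := by
  obtain ⟨z, hz⟩ := hac 1 hA.d_one
  refine ⟨(DirectSum.decompose 𝒜 z (-1) : A), SetLike.coe_mem _, ?_⟩
  have h := hA.decompose_d z 0
  rwa [hz, DirectSum.decompose_of_mem_same 𝒜 SetLike.GradedOne.one_mem, zero_sub,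
    eq_comm] at h

lemma isDGLeftIdeal_range_mulRight {i : ℤ} {x : A} (hx : x ∈ 𝒜 i) (hdx : dA x = 0) :
    IsDGLeftIdeal 𝒜 dA (AddMonoidHom.mulRight x).range := by
  refine ⟨?_, ?_, ?_⟩
  · rintro a y ⟨b, rfl⟩
    exact ⟨a * b, by simp [mul_assoc]⟩
  · rintro y ⟨b, rfl⟩
    refine ⟨dA b, ?_⟩
    change dA b * x = dA (b * x)
    rw [hA.leibniz_total b x, hdx, mul_zero, add_zero]
  · rintro y ⟨b, rfl⟩ j
    induction b using DirectSum.Decomposition.inductionOn 𝒜 with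
    | zero => simp
    | @homogeneous k m =>
        obtain ⟨m, hm⟩ := m
        by_cases hj : j = k + i
        · subst hj
          rw [AddMonoidHom.mulRight_apply,
            DirectSum.decompose_of_mem_same 𝒜 (SetLike.mul_mem_graded hm hx)]
          exact ⟨m, rfl⟩
        · rw [AddMonoidHom.mulRight_apply, DirectSum.decompose_of_mem_ne 𝒜
            (SetLike.mul_mem_graded hm hx) (fun h => hj h.symm)]
          exact zero_mem _
    | add a a' ha ha' =>
        rw [map_add, DirectSum.decompose_add, DirectSum.add_apply, AddSubgroup.coe_add]
        exact add_mem ha ha'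

lemma IsDGDivisionRing.exists_mul_eq_one_of_d_eq_zero (hdiv : IsDGDivisionRing 𝒜 dA)
    {i : ℤ} {x : A} (hx : x ∈ 𝒜 i) (hdx : dA x = 0) (hx0 : x ≠ 0) : ∃ a, a * x = 1 := by
  rcases hdiv.2.1 _ (isDGLeftIdeal_range_mulRight hA hx hdx) with h | h
  · have hxI : x ∈ (AddMonoidHom.mulRight x).range := ⟨1, one_mul x⟩
    exact absurd (by simpa [h] using hxI) hx0
  · have h1 : (1 : A) ∈ (AddMonoidHom.mulRight x).range := h ▸ AddSubgroup.mem_top 1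
    exact h1

lemma mul_self_eq_zero_of_d_eq_one (hcomm : IsGradedComm 𝒜) (hdiv : IsDGDivisionRing 𝒜 dA)
    (h2 : (2 : A) ≠ 0) {z : A} (hz : z ∈ 𝒜 (-1)) (hz1 : dA z = 1) : z * z = 0 := by
  have hmem : z * z ∈ 𝒜 (-1 + -1) := SetLike.mul_mem_graded hz hz
  have hd : dA (z * z) = 0 := by
    rw [hA.leibniz_total, hz1, one_mul, mul_one, signMap_of_mem 𝒜 hz]
    simp
  have htwo : z * z * 2 = 0 := by
    have h := hcomm (-1) (-1) z z hz hz
    rw [show (-1 : ℤ) * -1 = 1 by norm_num, Int.negOnePow_one] at h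
    rw [mul_two]
    nth_rewrite 1 [h]
    simp
  by_contra h0
  obtain ⟨a, ha⟩ := hdiv.exists_mul_eq_one_of_d_eq_zero hA hmem hd h0
  exact h2 (by rw [← one_mul 2, ← ha, mul_assoc, htwo, mul_zero])

end Acyclic

theorem dgSeparable_iff_cycles_grSeparable_general
    {A B : Type} [Ring A] [Ring B]
    (𝒜 : ℤ → AddSubgroup A) [GradedRing 𝒜] (𝒝 : ℤ → AddSubgroup B) [GradedRing 𝒝]
    (dA : A →+ A) (dB : B →+ B)
    (hA : IsDGRing 𝒜 dA) (hB : IsDGRing 𝒝 dB)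
    (hAcomm : IsGradedComm 𝒜) (hBcomm : IsGradedComm 𝒝)
    (hAdiv : IsDGDivisionRing 𝒜 dA)
    (hAacyclic : IsAcyclic dA)
    (φ : A →+* B) (hφ : IsDGHom 𝒜 dA 𝒝 dB φ)
    (ψ : cyclesSubring 𝒜 dA hA →+* cyclesSubring 𝒝 dB hB)
    (hψ : ∀ x : cyclesSubring 𝒜 dA hA, (ψ x : B) = φ (x : A)) :
    (IsGrSeparable ψ (cyclesGrading 𝒝 dB hB) → IsDGSeparable φ 𝒝 dB) ∧
      ((2 : A) ≠ 0 →
        (IsDGSeparable φ 𝒝 dB → IsGrSeparable ψ (cyclesGrading 𝒝 dB hB))) := by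
  obtain ⟨z, hz, hz1⟩ := hAacyclic.exists_mem_neg_one_d_eq_one hA
  have hw : φ z ∈ 𝒝 (-1) := hφ.map_mem _ z hz
  have hw1 : dB (φ z) = 1 := by rw [← hφ.map_d, hz1, map_one]
  constructor
  · intro hsep
    obtain ⟨e₀, he₀, he₀gr⟩ := isGrSeparable_iff.mp hsep
    have hincl : (cyclesSubring 𝒝 dB hB).subtype.comp ψ =
        φ.comp (cyclesSubring 𝒜 dA hA).subtype := RingHom.ext hψ
    have hegr := sepMap_mem_sepGrading hincl (fun _ _ hb => hb) he₀gr
    refine isDGSeparable_of_isSeparabilityIdempotent hB hφ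
      ⟨by rw [sepMul_sepMap, he₀.1, map_one], ?_⟩ hegr (sepDiff_sepMap_subtype hB hφ hincl e₀)
    exact sepLMul_eq_sepRMul_of_forall_cycles hB hBcomm hw hw1 hegr
      (fun c hc => he₀.sepLMul_sepMap hincl ⟨c, hc⟩)
  · intro h2 hsep
    obtain ⟨e, he, hegr⟩ := hsep.exists_isSeparabilityIdempotent
    have hzz := mul_self_eq_zero_of_d_eq_one hA hAcomm hAdiv h2 hz hz1
    have hww : φ z * φ z = 0 := by rw [← map_mul, hzz, map_zero]
    have hretr : (cyclesRetraction hB hBcomm hw hw1 hww).comp φ =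
        ψ.comp (cyclesRetraction hA hAcomm hz hz1 hzz) := RingHom.ext fun a => Subtype.ext <| by
      rw [RingHom.comp_apply, RingHom.comp_apply, hψ, cyclesRetraction_coe,
        cyclesRetraction_coe, map_sub, map_mul, hφ.map_d]
    exact isGrSeparable_iff.mpr ⟨_, he.sepMap hretr (cyclesRetraction_surjective hB _ _ _ _),
      sepMap_mem_sepGrading hretr (fun _ _ => cyclesRetraction_mem hB _ _ _ _) hegr⟩

/-- For graded commutative dg-division algebras with `(A,d_A)` acyclic:
if the restriction of `φ` to the cycles is a graded-separable extension then `φ` is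
dg-separable, and in characteristic different from `2` the converse holds. -/
theorem dgSeparable_iff_cycles_grSeparable
    {A B : Type} [Ring A] [Ring B]
    (𝒜 : ℤ → AddSubgroup A) [GradedRing 𝒜] (𝒝 : ℤ → AddSubgroup B) [GradedRing 𝒝]
    (dA : A →+ A) (dB : B →+ B)
    (hA : IsDGRing 𝒜 dA) (hB : IsDGRing 𝒝 dB)
    (hAcomm : IsGradedComm 𝒜) (hBcomm : IsGradedComm 𝒝)
    (hAdiv : IsDGDivisionRing 𝒜 dA) (hBdiv : IsDGDivisionRing 𝒝 dB)
    (hAacyclic : IsAcyclic dA)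
    (φ : A →+* B) (hφ : IsDGHom 𝒜 dA 𝒝 dB φ)
    (ψ : cyclesSubring 𝒜 dA hA →+* cyclesSubring 𝒝 dB hB)
    (hψ : ∀ x : cyclesSubring 𝒜 dA hA, (ψ x : B) = φ (x : A)) :
    (IsGrSeparable ψ (cyclesGrading 𝒝 dB hB) → IsDGSeparable φ 𝒝 dB) ∧
      ((2 : A) ≠ 0 →
        (IsDGSeparable φ 𝒝 dB → IsGrSeparable ψ (cyclesGrading 𝒝 dB hB))) :=
  dgSeparable_iff_cycles_grSeparable_general 𝒜 𝒝 dA dB hA hB hAcomm hBcomm hAdiv hAacyclic φ hφ ψ hψ
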